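/- The second Boussinesq Hamiltonian operator A²(φ,ψ) := (2σ·D_x³(φ) + 2u·D_x(φ) + u₁·φ + v·D_x(ψ), v·D_x(φ) + v₁·φ + 2·D_x(ψ)) is a variational bivector on the Boussinesq system: ℓ(A²(φ,ψ)) + A²(ℓ*(φ,ψ)) = (0,0) for all (φ,ψ) ∈ R². -/
import Mathlib


/-!
STATEMENT 9: The second Boussinesq Hamiltonian operator
`A²(φ,ψ) := (2σ·D_x³(φ) + 2u·D_x(φ) + u₁·φ + v·D_x(ψ), v·D_x(φ) + v₁·φ + 2·D_x(ψ))`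
is a variational bivector on the Boussinesq system:
`ℓ(A²(φ,ψ)) + A²(ℓ*(φ,ψ)) = (0,0)` for all `(φ,ψ) ∈ R²`.
-/

open MvPolynomial

noncomputable section

/-- The polynomial algebra `R = ℝ[u₀,u₁,…,v₀,v₁,…]`; `X (.inl k)` is `u_k`,
`X (.inr k)` is `v_k`. -/
abbrev BRing : Type := MvPolynomial (ℕ ⊕ ℕ) ℝ

/-- The jet variable `u_k`. -/
def uu (k : ℕ) : BRing := X (Sum.inl k)

/-- The jet variable `v_k`. -/
def vv (k : ℕ) : BRing := X (Sum.inr k)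

/-- The total derivative `D_x`: `D_x(u_k) = u_{k+1}`, `D_x(v_k) = v_{k+1}`. -/
def Dx : Derivation ℝ BRing BRing :=
  mkDerivation ℝ fun i =>
    match i with
    | Sum.inl k => uu (k + 1)
    | Sum.inr k => vv (k + 1)

/-- The total derivative `D_t` of the Boussinesq system
`u_t = u₁·v + u·v₁ + σ·v₃`, `v_t = u₁ + v·v₁`. -/
def Dt (σ : ℝ) : Derivation ℝ BRing BRing :=
  mkDerivation ℝ fun i =>
    match i with
    | Sum.inl k => (⇑Dx)^[k] (uu 1 * vv 0 + uu 0 * vv 1 + C σ * vv 3)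
    | Sum.inr k => (⇑Dx)^[k] (uu 1 + vv 0 * vv 1)

/-- The linearization `ℓ` of the Boussinesq system. -/
def ell (σ : ℝ) (φ ψ : BRing) : BRing × BRing :=
  (Dt σ φ - vv 0 * Dx φ - vv 1 * φ - C σ * Dx (Dx (Dx ψ)) - uu 0 * Dx ψ - uu 1 * ψ,
   -Dx φ + Dt σ ψ - vv 0 * Dx ψ - vv 1 * ψ)

/-- The adjoint linearization `ℓ*` of the Boussinesq system. -/
def ellStar (σ : ℝ) (φ ψ : BRing) : BRing × BRing :=
  (-Dt σ φ + vv 0 * Dx φ + Dx ψ,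
   C σ * Dx (Dx (Dx φ)) + uu 0 * Dx φ - Dt σ ψ + vv 0 * Dx ψ)

/-- The second Boussinesq Hamiltonian operator `A²`. -/
def A2 (σ : ℝ) (φ ψ : BRing) : BRing × BRing :=
  (C (2 * σ) * Dx (Dx (Dx φ)) + 2 * uu 0 * Dx φ + uu 1 * φ + vv 0 * Dx ψ,
   vv 0 * Dx φ + vv 1 * φ + 2 * Dx ψ)


lemma Dx_uu (k : ℕ) : Dx (uu k) = uu (k+1) := by simp [Dx, uu, mkDerivation_X]
lemma Dx_vv (k : ℕ) : Dx (vv k) = vv (k+1) := by simp [Dx, vv, mkDerivation_X]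
lemma Dx_C (r : ℝ) : Dx (C r) = 0 := by
  have h : (C r : BRing) = algebraMap ℝ BRing r := rfl
  rw [h, Derivation.map_algebraMap]
lemma two_eq_C : (2 : BRing) = C (2:ℝ) := by
  rw [show (2:ℝ) = ((2:ℕ):ℝ) by norm_num, C_eq_coe_nat]; norm_num
lemma Dx_two : Dx (2 : BRing) = 0 := by rw [two_eq_C, Dx_C]
lemma Dt_C (σ r : ℝ) : Dt σ (C r) = 0 := by
  have h : (C r : BRing) = algebraMap ℝ BRing r := rfl
  rw [h, Derivation.map_algebraMap]
lemma Dt_two (σ : ℝ) : Dt σ (2 : BRing) = 0 := by rw [two_eq_C, Dt_C]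

lemma Dt_uu (σ : ℝ) (k : ℕ) :
    Dt σ (uu k) = (⇑Dx)^[k] (uu 1 * vv 0 + uu 0 * vv 1 + C σ * vv 3) := by
  simp [Dt, uu, mkDerivation_X]
lemma Dt_vv (σ : ℝ) (k : ℕ) :
    Dt σ (vv k) = (⇑Dx)^[k] (uu 1 + vv 0 * vv 1) := by
  simp [Dt, vv, mkDerivation_X]

lemma comm_X (σ : ℝ) (i : ℕ ⊕ ℕ) : Dt σ (Dx (X i)) = Dx (Dt σ (X i)) := by
  cases i with
  | inl k =>
      show Dt σ (Dx (uu k)) = Dx (Dt σ (uu k))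
      rw [Dx_uu, Dt_uu, Dt_uu, Function.iterate_succ_apply']
  | inr k =>
      show Dt σ (Dx (vv k)) = Dx (Dt σ (vv k))
      rw [Dx_vv, Dt_vv, Dt_vv, Function.iterate_succ_apply']

lemma DtDx_comm (σ : ℝ) (p : BRing) : Dt σ (Dx p) = Dx (Dt σ p) := by
  induction p using MvPolynomial.induction_on with
  | C a => rw [show (C a : BRing) = algebraMap ℝ BRing a from rfl]; simp
  | add p q hp hq => simp [map_add, hp, hq]
  | mul_X p i hp =>
      simp only [Derivation.leibniz, smul_eq_mul, map_add, map_mul, hp, comm_X]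
      ring

lemma C2σ (σ : ℝ) : (C (2*σ) : BRing) = 2 * C σ := by
  rw [map_mul, ← two_eq_C]

/-- `A²` is a variational bivector on the Boussinesq system. -/
theorem boussinesq_A2_is_variational_bivector (σ : ℝ) (φ ψ : BRing) :
    ell σ (A2 σ φ ψ).1 (A2 σ φ ψ).2 + A2 σ (ellStar σ φ ψ).1 (ellStar σ φ ψ).2 = (0, 0) := by
  have h1 := C2σ σ
  simp only [ell, ellStar, A2, Prod.mk_add_mk, Prod.mk.injEq, h1]
  constructor <;>
  · simp only [map_add, map_sub, map_neg, Derivation.leibniz, smul_eq_mul,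
      Dx_uu, Dx_vv, Dx_two, Dt_two, Dx_C, Dt_C, DtDx_comm, map_zero, Dt_uu, Dt_vv,
      Function.iterate_succ, Function.iterate_zero, Function.comp_apply, id_eq]
    ring
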